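/- arXiv:2005.01643 — 3 statements merged into one kernel-verified Lean document; each statement's English description precedes it below -/
import Mathlib

section
/- For every integer H ≥ 1 and every ε ∈ (0,1), there exists a finite-horizon MDP with H+1 decision steps, a deterministic expert policy π*, and a policy π such that for every t ∈ {0,…,H} the per-step mistake probability under the expert's state distribution satisfies E_{s ∼ d_t^{π*}}[1 − π(π*(s)|s)] ≤ ε, yet the expected number of mistakes of π under its own trajectory distribution satisfies ℓ(π) ≥ ε·(1−ε)^H·(H+1)(H+2)/2. Hence the quadratic-in-horizon dependence of the behavioral cloning error bound cannot be improved in general (lower-bound / 'best possible' part of Theorem 1). -/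
open Finset

/-- Probability of a trajectory `τ = (s_0, a_0, …, s_H, a_H)` in a finite-horizon MDP
with `H + 1` decision steps, initial distribution `d0`, transition kernel `T` and
policy `π`. -/
noncomputable def trajP {S A : Type} [Fintype S] [Fintype A] (H : ℕ)
    (d0 : S → ℝ) (T : S → A → S → ℝ) (π : S → A → ℝ)
    (τ : (Fin (H + 1) → S) × (Fin (H + 1) → A)) : ℝ :=
  d0 (τ.1 0) * (∏ t : Fin (H + 1), π (τ.1 t) (τ.2 t)) *
    ∏ t : Fin H, T (τ.1 t.castSucc) (τ.2 t.castSucc) (τ.1 t.succ)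

/-- Time-indexed state distribution `d_t^π(s)`: probability that `s_t = s` under the
trajectory distribution `p_π`. -/
noncomputable def stateDistAt {S A : Type} [Fintype S] [Fintype A] [DecidableEq S] (H : ℕ)
    (d0 : S → ℝ) (T : S → A → S → ℝ) (π : S → A → ℝ) (t : Fin (H + 1)) (s : S) : ℝ :=
  ∑ τ : (Fin (H + 1) → S) × (Fin (H + 1) → A),
    if τ.1 t = s then trajP H d0 T π τ else 0

/-- A deterministic policy viewed as a stochastic policy. -/
noncomputable def detPolicy {S A : Type} [DecidableEq A] (πstar : S → A) : S → A → ℝ :=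
  fun _s a => if a = πstar _s then 1 else 0

/-- Expected number of mistakes `ℓ(π) = E_{τ ∼ p_π}[Σ_{t=0}^H 𝟙(a_t ≠ π*(s_t))]`. -/
noncomputable def mistakes {S A : Type} [Fintype S] [Fintype A] [DecidableEq A] (H : ℕ)
    (d0 : S → ℝ) (T : S → A → S → ℝ) (π : S → A → ℝ) (πstar : S → A) : ℝ :=
  ∑ τ : (Fin (H + 1) → S) × (Fin (H + 1) → A),
    trajP H d0 T π τ *
      ((univ.filter fun t : Fin (H + 1) => τ.2 t ≠ πstar (τ.1 t)).card : ℝ)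

/-
Take two states, an on-track state `0` and an absorbing failure state `1`, and two actions,
the expert always playing `0`. Playing `0` on track keeps the process on track; any other
move fails. The learner plays the expert's action with probability `1 - ε` on track and
never after failing. The expert never leaves the on-track state, where the learner errs with
probability exactly `ε`. The learner, however, first errs at step `k` with probability
`ε (1 - ε)^k ≥ ε (1 - ε)^H`, and then errs at each of the remaining `H + 1 - k` steps;
summing over `k` gives the factor `(H + 1)(H + 2) / 2`.
-/

section Trajectories

variable {S A : Type} [Fintype S] [Fintype A] {H : ℕ} {d0 : S → ℝ} {T : S → A → S → ℝ}
  {π : S → A → ℝ}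

theorem trajP_nonneg (hd0 : ∀ s, 0 ≤ d0 s) (hT : ∀ s a s', 0 ≤ T s a s')
    (hπ : ∀ s a, 0 ≤ π s a) (τ : (Fin (H + 1) → S) × (Fin (H + 1) → A)) :
    0 ≤ trajP H d0 T π τ :=
  mul_nonneg (mul_nonneg (hd0 _) (prod_nonneg fun _ _ => hπ _ _))
    (prod_nonneg fun _ _ => hT _ _ _)

theorem stateDistAt_eq_ite_of_trajP_concentrated [DecidableEq S]
    (τ₀ : (Fin (H + 1) → S) × (Fin (H + 1) → A)) (h₀ : trajP H d0 T π τ₀ = 1)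
    (h : ∀ τ ≠ τ₀, trajP H d0 T π τ = 0) (t : Fin (H + 1)) (s : S) :
    stateDistAt H d0 T π t s = if τ₀.1 t = s then 1 else 0 := by
  rw [stateDistAt, sum_eq_single τ₀ (fun τ _ hτ => by simp [h τ hτ]) (by simp), h₀]

theorem sum_le_mistakes [DecidableEq A] {ι : Type} [Fintype ι]
    (hd0 : ∀ s, 0 ≤ d0 s) (hT : ∀ s a s', 0 ≤ T s a s') (hπ : ∀ s a, 0 ≤ π s a)
    (πstar : S → A) (f : ι → (Fin (H + 1) → S) × (Fin (H + 1) → A))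
    (hf : Function.Injective f) :
    ∑ i, trajP H d0 T π (f i) * (#{t | (f i).2 t ≠ πstar ((f i).1 t)} : ℝ) ≤
      mistakes H d0 T π πstar := by
  calc _ = ∑ τ ∈ univ.map ⟨f, hf⟩, trajP H d0 T π τ * (#{t | τ.2 t ≠ πstar (τ.1 t)} : ℝ) :=
        (sum_map _ _ _).symm
    _ ≤ _ := sum_le_univ_sum_of_nonneg fun τ =>
        mul_nonneg (trajP_nonneg hd0 hT hπ τ) (Nat.cast_nonneg _)

end Trajectories

theorem mul_pow_le_prod {n : ℕ} {f : Fin (n + 1) → ℝ} {a b : ℝ} (k : Fin (n + 1))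
    (ha : 0 ≤ a) (hb : 0 ≤ b) (hk : a ≤ f k) (hf : ∀ t ≠ k, b ≤ f t) :
    a * b ^ n ≤ ∏ t, f t := by
  rw [← mul_prod_erase univ f (mem_univ k)]
  have : b ^ n = ∏ _t ∈ univ.erase k, b := by simp [card_erase_of_mem]
  rw [this]
  exact mul_le_mul hk (prod_le_prod (fun _ _ => hb) fun t ht => hf t (ne_of_mem_erase ht))
    (prod_nonneg fun _ _ => hb) (ha.trans hk)

theorem sum_range_sub_eq (n : ℕ) :
    ∑ i ∈ range (n + 1), ((n : ℝ) + 1 - i) = ((n : ℝ) + 1) * ((n : ℝ) + 2) / 2 := by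
  induction n with
  | zero => norm_num
  | succ n ih =>
    rw [sum_range_succ']
    push_cast
    simp only [add_sub_add_right_eq_sub, ih]
    ring

namespace AbsorbingFailure

noncomputable def initial (s : Fin 2) : ℝ := if s = 0 then 1 else 0

def step (s a : Fin 2) : Fin 2 := if s = 0 ∧ a = 0 then 0 else 1

noncomputable def kernel (s a s' : Fin 2) : ℝ := if s' = step s a then 1 else 0

def expert : Fin 2 → Fin 2 := fun _ => 0

noncomputable def learner (ε : ℝ) (s a : Fin 2) : ℝ :=
  if s = 0 then (if a = 0 then 1 - ε else ε) else (if a = 0 then 0 else 1)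

def expertRollout (H : ℕ) : (Fin (H + 1) → Fin 2) × (Fin (H + 1) → Fin 2) :=
  (fun _ => 0, fun _ => 0)

def firstMistakeAt (H : ℕ) (k : Fin (H + 1)) : (Fin (H + 1) → Fin 2) × (Fin (H + 1) → Fin 2) :=
  (fun t => if t ≤ k then 0 else 1, fun t => if t < k then 0 else 1)

theorem initial_nonneg (s : Fin 2) : 0 ≤ initial s := by
  unfold initial; split_ifs <;> norm_num

theorem sum_initial : ∑ s, initial s = 1 := by
  simp [initial]

theorem kernel_nonneg (s a s' : Fin 2) : 0 ≤ kernel s a s' := by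
  unfold kernel; split_ifs <;> norm_num

theorem sum_kernel (s a : Fin 2) : ∑ s', kernel s a s' = 1 := by
  simp [kernel]

theorem learner_nonneg {ε : ℝ} (hε0 : 0 ≤ ε) (hε1 : ε ≤ 1) (s a : Fin 2) :
    0 ≤ learner ε s a := by
  unfold learner; split_ifs <;> linarith

theorem sum_learner (ε : ℝ) (s : Fin 2) : ∑ a, learner ε s a = 1 := by
  fin_cases s <;> simp [learner, Fin.sum_univ_two]

theorem trajP_expertRollout (H : ℕ) :
    trajP H initial kernel (detPolicy expert) (expertRollout H) = 1 := by
  simp [trajP, initial, kernel, step, expert, detPolicy, expertRollout]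

theorem kernel_firstMistakeAt (H : ℕ) (k : Fin (H + 1)) (t : Fin H) :
    kernel ((firstMistakeAt H k).1 t.castSucc) ((firstMistakeAt H k).2 t.castSucc)
      ((firstMistakeAt H k).1 t.succ) = 1 := by
  simp only [firstMistakeAt, kernel, step, Fin.le_def, Fin.lt_def, Fin.val_castSucc, Fin.val_succ]
  split_ifs <;> simp_all
  omega

theorem eq_expertRollout_of_trajP_ne_zero {H : ℕ}
    {τ : (Fin (H + 1) → Fin 2) × (Fin (H + 1) → Fin 2)}
    (hτ : trajP H initial kernel (detPolicy expert) τ ≠ 0) : τ = expertRollout H := by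
  simp only [trajP, mul_ne_zero_iff, prod_ne_zero_iff, mem_univ, forall_const] at hτ
  obtain ⟨⟨h_init, h_act⟩, h_trans⟩ := hτ
  have h_act' : ∀ t, τ.2 t = 0 := fun t => by
    by_contra h
    exact h_act t (by simp [detPolicy, expert, h])
  have h_state : ∀ t, τ.1 t = 0 := by
    refine Fin.induction (by simpa [initial] using h_init) fun t ht => ?_
    simpa [kernel, step, ht, h_act'] using h_trans t
  exact Prod.ext (funext h_state) (funext h_act')

theorem stateDistAt_expert (H : ℕ) (t : Fin (H + 1)) (s : Fin 2) :
    stateDistAt H initial kernel (detPolicy expert) t s = if s = 0 then 1 else 0 := by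
  rw [stateDistAt_eq_ite_of_trajP_concentrated (expertRollout H) (trajP_expertRollout H)
    fun τ hτ => not_not.1 (mt eq_expertRollout_of_trajP_ne_zero hτ)]
  simp [expertRollout, eq_comm]

theorem firstMistakeAt_injective (H : ℕ) : Function.Injective (firstMistakeAt H) := by
  have key : ∀ {k k'}, firstMistakeAt H k = firstMistakeAt H k' → k ≤ k' := fun {k k'} h => by
    by_contra hlt
    simpa [firstMistakeAt, not_le.1 hlt] using congr_fun (congr_arg Prod.snd h) k'
  exact fun k k' h => le_antisymm (key h) (key h.symm)

theorem card_mistakes_firstMistakeAt (H : ℕ) (k : Fin (H + 1)) :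
    (#{t | (firstMistakeAt H k).2 t ≠ expert ((firstMistakeAt H k).1 t)} : ℝ) = H + 1 - k := by
  have : ({t | (firstMistakeAt H k).2 t ≠ expert ((firstMistakeAt H k).1 t)} : Finset _) =
      Ici k := by
    ext t
    simp [firstMistakeAt, expert]
  rw [this, Fin.card_Ici, Nat.cast_sub k.is_lt.le, Nat.cast_succ]

theorem mul_pow_le_trajP_firstMistakeAt {ε : ℝ} (hε0 : 0 ≤ ε) (hε1 : ε ≤ 1) (H : ℕ)
    (k : Fin (H + 1)) :
    ε * (1 - ε) ^ H ≤ trajP H initial kernel (learner ε) (firstMistakeAt H k) := by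
  rw [trajP, prod_eq_one fun t _ => kernel_firstMistakeAt H k t, mul_one]
  simp only [firstMistakeAt, initial, Fin.zero_le, if_true, one_mul]
  refine mul_pow_le_prod k hε0 (by linarith) (by simp [learner]) (fun t ht => ?_)
  rcases lt_or_gt_of_ne ht with h | h
  · simp [learner, h, h.le]
  · simp [learner, not_lt.2 h.le, not_le.2 h, hε0]

end AbsorbingFailure

open AbsorbingFailure in
theorem behavioral_cloning_error_lower_bound_general
    (H : ℕ) (ε : ℝ) (hε0 : 0 < ε) (hε1 : ε < 1) :
    ∃ (nS nA : ℕ) (d0 : Fin (nS + 1) → ℝ)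
      (T : Fin (nS + 1) → Fin (nA + 1) → Fin (nS + 1) → ℝ)
      (πstar : Fin (nS + 1) → Fin (nA + 1))
      (π : Fin (nS + 1) → Fin (nA + 1) → ℝ),
      (∀ s, 0 ≤ d0 s) ∧ (∑ s, d0 s = 1) ∧
      (∀ s a s', 0 ≤ T s a s') ∧ (∀ s a, ∑ s', T s a s' = 1) ∧
      (∀ s a, 0 ≤ π s a) ∧ (∀ s, ∑ a, π s a = 1) ∧
      (∀ t : Fin (H + 1),
        ∑ s, stateDistAt H d0 T (detPolicy πstar) t s * (1 - π s (πstar s)) ≤ ε) ∧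
      ε * (1 - ε) ^ H * ((H : ℝ) + 1) * ((H : ℝ) + 2) / 2 ≤ mistakes H d0 T π πstar := by
  have hlearner := learner_nonneg hε0.le hε1.le
  refine ⟨1, 1, initial, kernel, expert, learner ε, initial_nonneg, sum_initial, kernel_nonneg,
    sum_kernel, hlearner, sum_learner ε, fun t => ?_, ?_⟩
  · simp [stateDistAt_expert, learner, expert]
  calc ε * (1 - ε) ^ H * ((H : ℝ) + 1) * ((H : ℝ) + 2) / 2
      = ∑ k : Fin (H + 1), ε * (1 - ε) ^ H * ((H : ℝ) + 1 - k) := by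
        rw [← mul_sum, Fin.sum_univ_eq_sum_range (fun k => (H : ℝ) + 1 - k), sum_range_sub_eq]
        ring
    _ ≤ ∑ k, trajP H initial kernel (learner ε) (firstMistakeAt H k) *
          (#{t | (firstMistakeAt H k).2 t ≠ expert ((firstMistakeAt H k).1 t)} : ℝ) := by
        refine sum_le_sum fun k _ => ?_
        rw [card_mistakes_firstMistakeAt]
        have hk : (k : ℝ) ≤ H := by exact_mod_cast Nat.lt_succ_iff.1 k.is_lt
        exact mul_le_mul_of_nonneg_right (mul_pow_le_trajP_firstMistakeAt hε0.le hε1.le H k)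
          (by linarith)
    _ ≤ mistakes H initial kernel (learner ε) expert :=
        sum_le_mistakes initial_nonneg kernel_nonneg hlearner expert _ (firstMistakeAt_injective H)

/-- **Lower-bound ("best possible") part of Theorem 1.**
For every horizon `H ≥ 1` and `ε ∈ (0,1)` there is a finite-horizon MDP, a deterministic
expert `π*` and a policy `π` whose per-step mistake probability under the expert's state
distribution is at most `ε` at every time step, and yet
`ℓ(π) ≥ ε·(1−ε)^H·(H+1)(H+2)/2`: the quadratic dependence on the horizon of the
behavioral cloning bound cannot be improved in general. -/
theorem behavioral_cloning_error_lower_bound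
    (H : ℕ) (hH : 1 ≤ H) (ε : ℝ) (hε0 : 0 < ε) (hε1 : ε < 1) :
    ∃ (nS nA : ℕ) (d0 : Fin (nS + 1) → ℝ)
      (T : Fin (nS + 1) → Fin (nA + 1) → Fin (nS + 1) → ℝ)
      (πstar : Fin (nS + 1) → Fin (nA + 1))
      (π : Fin (nS + 1) → Fin (nA + 1) → ℝ),
      (∀ s, 0 ≤ d0 s) ∧ (∑ s, d0 s = 1) ∧
      (∀ s a s', 0 ≤ T s a s') ∧ (∀ s a, ∑ s', T s a s' = 1) ∧
      (∀ s a, 0 ≤ π s a) ∧ (∀ s, ∑ a, π s a = 1) ∧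
      (∀ t : Fin (H + 1),
        ∑ s, stateDistAt H d0 T (detPolicy πstar) t s * (1 - π s (πstar s)) ≤ ε) ∧
      ε * (1 - ε) ^ H * ((H : ℝ) + 1) * ((H : ℝ) + 2) / 2 ≤ mistakes H d0 T π πstar :=
  behavioral_cloning_error_lower_bound_general H ε hε0 hε1
end

section
/- Let M be a finite-horizon MDP with H+1 decision steps (t = 0,…,H), let π* be a deterministic expert policy, and let π be a learned policy. Suppose that for every t ∈ {0,…,H}, the probability of a mistake under the learned policy's OWN state distribution satisfies E_{s ∼ d_t^{π}}[1 − π(π*(s)|s)] ≤ ε. Then the expected number of mistakes satisfies ℓ(π) = E_{τ ∼ p_π}[Σ_{t=0}^{H} 𝟙(a_t ≠ π*(s_t))] ≤ (H+1)·ε, i.e., the error grows only linearly in the horizon when training states are drawn on-policy (DAgger error bound, Theorem 2). -/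
open Finset

section Aux
variable {S A : Type} [Fintype S] [Fintype A]

/-- Peel off the last state and action from a trajectory sum. -/
lemma sum_traj_snoc (H : ℕ) (F : (Fin (H + 2) → S) × (Fin (H + 2) → A) → ℝ) :
    ∑ τ : (Fin (H + 2) → S) × (Fin (H + 2) → A), F τ =
      ∑ σ : Fin (H + 1) → S, ∑ α : Fin (H + 1) → A, ∑ s : S, ∑ a : A,
        F (Fin.snoc σ s, Fin.snoc α a) := by
  let E : (((Fin (H+1) → S) × (Fin (H+1) → A)) × (S × A)) ≃
      ((Fin (H + 2) → S) × (Fin (H + 2) → A)) :=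
    ((Equiv.prodComm _ _).trans
      (Equiv.prodProdProdComm S A (Fin (H+1) → S) (Fin (H+1) → A))).trans
      ((Fin.snocEquiv fun _ => S).prodCongr (Fin.snocEquiv fun _ => A))
  rw [← Equiv.sum_comp E F]
  simp only [Fintype.sum_prod_type]
  rfl

lemma trajP_snoc (H : ℕ) (d0 : S → ℝ) (T : S → A → S → ℝ) (π : S → A → ℝ)
    (σ : Fin (H + 1) → S) (α : Fin (H + 1) → A) (s : S) (a : A) :
    trajP (H + 1) d0 T π (Fin.snoc σ s, Fin.snoc α a) =
      trajP H d0 T π (σ, α) * (T (σ (Fin.last H)) (α (Fin.last H)) s * π s a) := by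
  unfold trajP
  simp only
  have h0 : (Fin.snoc σ s : Fin (H+2) → S) 0 = σ 0 := by
    have : (0 : Fin (H + 2)) = Fin.castSucc 0 := rfl
    rw [this, Fin.snoc_castSucc]
  rw [h0]
  rw [Fin.prod_univ_castSucc (fun t : Fin (H+2) => π ((Fin.snoc σ s : Fin (H+2) → S) t) ((Fin.snoc α a : Fin (H+2) → A) t))]
  rw [Fin.prod_univ_castSucc (fun t : Fin (H+1) => T ((Fin.snoc σ s : Fin (H+2) → S) t.castSucc) ((Fin.snoc α a : Fin (H+2) → A) t.castSucc) ((Fin.snoc σ s : Fin (H+2) → S) t.succ))]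
  simp only [Fin.succ_castSucc, Fin.snoc_castSucc, Fin.snoc_last, Fin.succ_last]
  ring

end Aux

lemma jointM {S A : Type} [Fintype S] [Fintype A]
    (d0 : S → ℝ) (T : S → A → S → ℝ) (π : S → A → ℝ)
    (hT1 : ∀ s a, ∑ s', T s a s' = 1) (hπ1 : ∀ s, ∑ a, π s a = 1) :
    ∀ (H : ℕ) (t : Fin (H + 1)) (f : S → A → ℝ),
      ∑ τ : (Fin (H + 1) → S) × (Fin (H + 1) → A),
          trajP H d0 T π τ * f (τ.1 t) (τ.2 t)
        = ∑ τ : (Fin (H + 1) → S) × (Fin (H + 1) → A),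
            trajP H d0 T π τ * ∑ a, π (τ.1 t) a * f (τ.1 t) a := by
  intro H
  induction H with
  | zero =>
    intro t f
    have ht : t = 0 := by ext; omega
    subst ht
    rw [Fintype.sum_prod_type, Fintype.sum_prod_type]
    refine Finset.sum_congr rfl fun σ _ => ?_
    rw [← Equiv.sum_comp (Equiv.funUnique (Fin 1) A).symm
      (fun α : Fin 1 → A => trajP 0 d0 T π (σ, α) * f (σ 0) (α 0)),
      ← Equiv.sum_comp (Equiv.funUnique (Fin 1) A).symm
      (fun α : Fin 1 → A => trajP 0 d0 T π (σ, α) * ∑ a, π (σ 0) a * f (σ 0) a)]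
    simp only [trajP, Equiv.funUnique_symm_apply, uniqueElim, Fin.prod_univ_succ, Fin.prod_univ_one, Fin.prod_univ_zero, mul_one]
    calc ∑ b : A, d0 (σ 0) * π (σ 0) b * f (σ 0) b
        = d0 (σ 0) * ∑ a, π (σ 0) a * f (σ 0) a := by
          rw [Finset.mul_sum]; exact Finset.sum_congr rfl fun b _ => by ring
      _ = ∑ b : A, d0 (σ 0) * π (σ 0) b * ∑ a, π (σ 0) a * f (σ 0) a := by
          rw [show (∑ b : A, d0 (σ 0) * π (σ 0) b * ∑ a, π (σ 0) a * f (σ 0) a)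
              = (∑ b : A, π (σ 0) b) * (d0 (σ 0) * ∑ a, π (σ 0) a * f (σ 0) a) by
            rw [Finset.sum_mul]; exact Finset.sum_congr rfl fun b _ => by ring]
          rw [hπ1, one_mul]
  | succ H ih =>
    intro t f
    refine Fin.lastCases ?_ ?_ t
    · -- t = last
      rw [sum_traj_snoc, sum_traj_snoc]
      refine Finset.sum_congr rfl fun σ _ => Finset.sum_congr rfl fun α _ =>
        Finset.sum_congr rfl fun s _ => ?_
      simp only [trajP_snoc, Fin.snoc_last]
      calc ∑ a : A, trajP H d0 T π (σ, α) * (T (σ (Fin.last H)) (α (Fin.last H)) s * π s a) * f s a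
          = trajP H d0 T π (σ, α) * T (σ (Fin.last H)) (α (Fin.last H)) s *
              ∑ a, π s a * f s a := by
            rw [Finset.mul_sum]; exact Finset.sum_congr rfl fun a _ => by ring
        _ = (∑ a : A, π s a) * (trajP H d0 T π (σ, α) *
              T (σ (Fin.last H)) (α (Fin.last H)) s * ∑ a, π s a * f s a) := by
            rw [hπ1, one_mul]
        _ = ∑ a : A, trajP H d0 T π (σ, α) * (T (σ (Fin.last H)) (α (Fin.last H)) s * π s a) *
              ∑ a', π s a' * f s a' := by
            rw [Finset.sum_mul]; exact Finset.sum_congr rfl fun a _ => by ring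
    · -- t = castSucc t'
      intro t'
      have key : ∀ g : S → A → ℝ,
          ∑ τ : (Fin (H + 2) → S) × (Fin (H + 2) → A),
              trajP (H+1) d0 T π τ * g (τ.1 t'.castSucc) (τ.2 t'.castSucc)
            = ∑ τ : (Fin (H + 1) → S) × (Fin (H + 1) → A),
                trajP H d0 T π τ * g (τ.1 t') (τ.2 t') := by
        intro g
        rw [sum_traj_snoc]
        conv_rhs => rw [Fintype.sum_prod_type]
        refine Finset.sum_congr rfl fun σ _ => Finset.sum_congr rfl fun α _ => ?_
        simp only [trajP_snoc, Fin.snoc_castSucc]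
        calc ∑ s : S, ∑ a : A,
              trajP H d0 T π (σ, α) * (T (σ (Fin.last H)) (α (Fin.last H)) s * π s a) *
                g (σ t') (α t')
            = ∑ s : S, trajP H d0 T π (σ, α) * g (σ t') (α t') *
                T (σ (Fin.last H)) (α (Fin.last H)) s * ∑ a, π s a := by
              refine Finset.sum_congr rfl fun s _ => ?_
              rw [Finset.mul_sum]; exact Finset.sum_congr rfl fun a _ => by ring
          _ = trajP H d0 T π (σ, α) * g (σ t') (α t') *
                ∑ s, T (σ (Fin.last H)) (α (Fin.last H)) s := by
              rw [Finset.mul_sum]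
              exact Finset.sum_congr rfl fun s _ => by rw [hπ1, mul_one]
          _ = trajP H d0 T π (σ, α) * g (σ t') (α t') := by rw [hT1, mul_one]
      have h1 := key f
      have h2 := key (fun s _ => ∑ a, π s a * f s a)
      rw [h1, h2, ih t' f]

lemma bridge {S A : Type} [Fintype S] [Fintype A] [DecidableEq S]
    (H : ℕ) (d0 : S → ℝ) (T : S → A → S → ℝ) (π : S → A → ℝ)
    (t : Fin (H + 1)) (g : S → ℝ) :
    ∑ τ : (Fin (H + 1) → S) × (Fin (H + 1) → A),
        trajP H d0 T π τ * g (τ.1 t)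
      = ∑ s, stateDistAt H d0 T π t s * g s := by
  unfold stateDistAt
  have h : ∀ s : S, (∑ τ : (Fin (H + 1) → S) × (Fin (H + 1) → A),
        if τ.1 t = s then trajP H d0 T π τ else 0) * g s
      = ∑ τ : (Fin (H + 1) → S) × (Fin (H + 1) → A),
        if τ.1 t = s then trajP H d0 T π τ * g s else 0 := by
    intro s
    rw [Finset.sum_mul]
    exact Finset.sum_congr rfl fun τ _ => by split <;> simp
  rw [Finset.sum_congr rfl fun s (_ : s ∈ Finset.univ) => h s, Finset.sum_comm]
  exact Finset.sum_congr rfl fun τ _ => by simp [Finset.sum_ite_eq]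

/-- **DAgger error bound (Theorem 2).**
If for every time step the per-step mistake probability of `π` under the learned policy's
own state distribution `d_t^π` is at most `ε`, then the expected number of mistakes
satisfies `ℓ(π) ≤ (H+1)·ε`, i.e. the error grows only linearly in the horizon. -/
theorem dagger_error_bound
    {S A : Type} [Fintype S] [Fintype A] [DecidableEq S] [DecidableEq A]
    (H : ℕ) (d0 : S → ℝ) (T : S → A → S → ℝ)
    (πstar : S → A) (π : S → A → ℝ) (ε : ℝ)
    (hd00 : ∀ s, 0 ≤ d0 s) (hd01 : ∑ s, d0 s = 1)
    (hT0 : ∀ s a s', 0 ≤ T s a s') (hT1 : ∀ s a, ∑ s', T s a s' = 1)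
    (hπ0 : ∀ s a, 0 ≤ π s a) (hπ1 : ∀ s, ∑ a, π s a = 1)
    (hmistake : ∀ t : Fin (H + 1),
      ∑ s, stateDistAt H d0 T π t s * (1 - π s (πstar s)) ≤ ε) :
    mistakes H d0 T π πstar ≤ ((H : ℝ) + 1) * ε := by
  have hcard : ∀ τ : (Fin (H + 1) → S) × (Fin (H + 1) → A),
      ((univ.filter fun t : Fin (H + 1) => τ.2 t ≠ πstar (τ.1 t)).card : ℝ)
        = ∑ t : Fin (H + 1), (if τ.2 t ≠ πstar (τ.1 t) then (1 : ℝ) else 0) := by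
    intro τ
    rw [Finset.card_filter]
    push_cast
    rfl
  have hsplit : mistakes H d0 T π πstar
      = ∑ t : Fin (H + 1), ∑ τ : (Fin (H + 1) → S) × (Fin (H + 1) → A),
          trajP H d0 T π τ * (if τ.2 t ≠ πstar (τ.1 t) then (1 : ℝ) else 0) := by
    unfold mistakes
    rw [Finset.sum_congr rfl fun τ (_ : τ ∈ Finset.univ) => by rw [hcard τ, Finset.mul_sum]]
    rw [Finset.sum_comm]
  rw [hsplit]
  have hstep : ∀ t : Fin (H + 1),
      ∑ τ : (Fin (H + 1) → S) × (Fin (H + 1) → A),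
          trajP H d0 T π τ * (if τ.2 t ≠ πstar (τ.1 t) then (1 : ℝ) else 0) ≤ ε := by
    intro t
    have hJ := jointM d0 T π hT1 hπ1 H t (fun s a => if a ≠ πstar s then (1 : ℝ) else 0)
    rw [hJ]
    have hg : ∀ s : S, (∑ a, π s a * (if a ≠ πstar s then (1 : ℝ) else 0))
        = 1 - π s (πstar s) := by
      intro s
      have h1 : ∀ a : A, π s a * (if a ≠ πstar s then (1 : ℝ) else 0)
          = π s a - (if a = πstar s then π s a else 0) := by
        intro a; by_cases h : a = πstar s <;> simp [h]
      rw [Finset.sum_congr rfl fun a (_ : a ∈ Finset.univ) => h1 a,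
        Finset.sum_sub_distrib, hπ1]
      simp
    rw [Finset.sum_congr rfl fun τ (_ : τ ∈ Finset.univ) => by rw [hg (τ.1 t)]]
    rw [bridge H d0 T π t (fun s => 1 - π s (πstar s))]
    exact hmistake t
  calc ∑ t : Fin (H + 1), ∑ τ : (Fin (H + 1) → S) × (Fin (H + 1) → A),
        trajP H d0 T π τ * (if τ.2 t ≠ πstar (τ.1 t) then (1 : ℝ) else 0)
      ≤ ∑ _t : Fin (H + 1), ε := Finset.sum_le_sum fun t _ => hstep t
    _ = ((H : ℝ) + 1) * ε := by
        rw [Finset.sum_const, Finset.card_univ, Fintype.card_fin]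
        push_cast
        ring
end

section
/- Let S be a finite state space and A a finite action space, let T and T̂ be two transition kernels on S × A, let r : S × A → ℝ satisfy |r(s,a)| ≤ r_max, let γ ∈ (0,1), and let π and π_β be policies. Suppose D_TV(T̂(·|s,a), T(·|s,a)) ≤ ε_m for all (s,a) and D_TV(π(·|s), π_β(·|s)) ≤ ε_π for all s. Let J(π) denote the expected discounted return of π under the true dynamics T and J_ψ(π) its expected discounted return under the learned model T̂ (same d₀, r, γ). Then J(π) ≥ J_ψ(π) − [ 2·γ·r_max·(ε_m + 2·ε_π)/(1−γ)² + 4·r_max·ε_π/(1−γ) ] (the model-based policy learning return bound of Janner et al. as stated in the tutorial). -/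
/-!
Both returns belong to the same policy `π`, so only the model error matters. Writing the
step-`t` state marginals as `d_t = d_{t-1} P` and `d̂_t = d̂_{t-1} P̂` with the policy's state
kernels `P`, `P̂`, one gets `d_t - d̂_t = (d_{t-1} - d̂_{t-1}) P + d̂_{t-1} (P - P̂)`; the first
term does not increase the `ℓ¹` norm and the second has norm at most `2 εm`, so
`‖d_t - d̂_t‖₁ ≤ 2 εm t`. The step-`t` expected rewards therefore differ by at most
`2 rmax εm t`, and `∑ₜ t γ^t = γ / (1 - γ)²` yields `|J - Ĵ| ≤ 2 γ rmax εm / (1 - γ)²`,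
which is the bound with the (nonnegative) `επ` terms dropped.
-/

open Finset

/-- Time-indexed state marginal `d_t^π(s) = P_{p_π}(s_t = s)` of the Markov chain
induced by policy `π` in a finite MDP with initial distribution `d0` and transition
kernel `T`. -/
noncomputable def stateDist {S A : Type} [Fintype S] [Fintype A]
    (d0 : S → ℝ) (T : S → A → S → ℝ) (π : S → A → ℝ) : ℕ → S → ℝ
  | 0, s => d0 s
  | t + 1, s' => ∑ s, ∑ a, stateDist d0 T π t s * π s a * T s a s'

/-- Normalized discounted state occupancy `d^π(s) = (1−γ) Σ_{t=0}^∞ γ^t P_{p_π}(s_t = s)`. -/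
noncomputable def occ {S A : Type} [Fintype S] [Fintype A]
    (d0 : S → ℝ) (T : S → A → S → ℝ) (π : S → A → ℝ) (γ : ℝ) (s : S) : ℝ :=
  (1 - γ) * ∑' t : ℕ, γ ^ t * stateDist d0 T π t s

/-- Infinite-horizon expected discounted return
`J(π) = E[Σ_{t=0}^∞ γ^t r(s_t, a_t)]` under dynamics `T`. -/
noncomputable def Jinf {S A : Type} [Fintype S] [Fintype A]
    (d0 : S → ℝ) (T : S → A → S → ℝ) (π : S → A → ℝ) (r : S → A → ℝ) (γ : ℝ) : ℝ :=
  ∑' t : ℕ, γ ^ t * ∑ s, ∑ a, stateDist d0 T π t s * π s a * r s a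

/-- Total variation distance between two distributions on a finite type. -/
noncomputable def tvDist {Y : Type} [Fintype Y] (p q : Y → ℝ) : ℝ :=
  (1 / 2) * ∑ y, |p y - q y|

lemma tvDist_comm {Y : Type} [Fintype Y] (p q : Y → ℝ) : tvDist p q = tvDist q p := by
  simp only [tvDist, abs_sub_comm]

lemma tvDist_nonneg {Y : Type} [Fintype Y] (p q : Y → ℝ) : 0 ≤ tvDist p q := by
  unfold tvDist; positivity

lemma sum_abs_sub_eq_two_mul_tvDist {Y : Type} [Fintype Y] (p q : Y → ℝ) :
    ∑ y, |p y - q y| = 2 * tvDist p q := by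
  rw [tvDist]; ring

section Simplex

variable {ι κ : Type*} [Fintype ι] [Fintype κ]

lemma abs_sum_mul_le {v f : ι → ℝ} {M : ℝ} (hf : ∀ i, |f i| ≤ M) :
    |∑ i, v i * f i| ≤ M * ∑ i, |v i| :=
  calc |∑ i, v i * f i| ≤ ∑ i, |v i| * M :=
        (abs_sum_le_sum_abs _ _).trans <| sum_le_sum fun i _ => by
          rw [abs_mul]; exact mul_le_mul_of_nonneg_left (hf i) (abs_nonneg _)
    _ = M * ∑ i, |v i| := by rw [← sum_mul, mul_comm]

lemma sum_abs_of_mem_stdSimplex {p : ι → ℝ} (hp : p ∈ stdSimplex ℝ ι) : ∑ i, |p i| = 1 := by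
  simp only [abs_of_nonneg (hp.1 _), hp.2]

lemma abs_sum_mul_le_of_mem_stdSimplex {p f : ι → ℝ} {M : ℝ} (hp : p ∈ stdSimplex ℝ ι)
    (hf : ∀ i, |f i| ≤ M) : |∑ i, p i * f i| ≤ M := by
  simpa only [sum_abs_of_mem_stdSimplex hp, mul_one] using abs_sum_mul_le (v := p) hf

lemma sum_mul_mem_stdSimplex {p : ι → ℝ} {P : ι → κ → ℝ} (hp : p ∈ stdSimplex ℝ ι)
    (hP : ∀ i, P i ∈ stdSimplex ℝ κ) : (fun j => ∑ i, p i * P i j) ∈ stdSimplex ℝ κ := by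
  refine ⟨fun j => sum_nonneg fun i _ => mul_nonneg (hp.1 i) ((hP i).1 j), ?_⟩
  simp only [sum_comm (γ := κ), ← mul_sum, (hP _).2, mul_one, hp.2]

lemma sum_abs_sum_mul_le (v : ι → ℝ) (P : ι → κ → ℝ) :
    ∑ j, |∑ i, v i * P i j| ≤ ∑ i, |v i| * ∑ j, |P i j| :=
  calc ∑ j, |∑ i, v i * P i j| ≤ ∑ j, ∑ i, |v i| * |P i j| :=
        sum_le_sum fun j _ => (abs_sum_le_sum_abs _ _).trans_eq <| by simp only [abs_mul]
    _ = ∑ i, |v i| * ∑ j, |P i j| := by rw [sum_comm]; simp only [mul_sum]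

lemma sum_abs_sum_mul_le_sum_abs (v : ι → ℝ) {P : ι → κ → ℝ}
    (hP : ∀ i, P i ∈ stdSimplex ℝ κ) : ∑ j, |∑ i, v i * P i j| ≤ ∑ i, |v i| :=
  (sum_abs_sum_mul_le v P).trans_eq <| by simp only [sum_abs_of_mem_stdSimplex (hP _), mul_one]

lemma sum_abs_sum_mul_le_of_mem_stdSimplex {p : ι → ℝ} {P : ι → κ → ℝ} {δ : ℝ}
    (hp : p ∈ stdSimplex ℝ ι) (hP : ∀ i, ∑ j, |P i j| ≤ δ) : ∑ j, |∑ i, p i * P i j| ≤ δ :=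
  calc ∑ j, |∑ i, p i * P i j| ≤ ∑ i, p i * δ := (sum_abs_sum_mul_le p P).trans <|
        sum_le_sum fun i _ => by
          rw [abs_of_nonneg (hp.1 i)]
          exact mul_le_mul_of_nonneg_left (hP i) (hp.1 i)
    _ = δ := by rw [← sum_mul, hp.2, one_mul]

end Simplex

lemma summable_geometric_mul_of_abs_le {γ M : ℝ} {c : ℕ → ℝ} (hγ0 : 0 ≤ γ) (hγ1 : γ < 1)
    (hc : ∀ t, |c t| ≤ M) : Summable fun t => γ ^ t * c t := by
  refine ((summable_geometric_of_lt_one hγ0 hγ1).mul_right M).of_norm_bounded fun t => ?_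
  rw [Real.norm_eq_abs, abs_mul, abs_of_nonneg (pow_nonneg hγ0 t)]
  exact mul_le_mul_of_nonneg_left (hc t) (pow_nonneg hγ0 t)

lemma abs_tsum_geometric_mul_sub_le {γ M K : ℝ} {c c' : ℕ → ℝ} (hγ0 : 0 ≤ γ) (hγ1 : γ < 1)
    (hc : ∀ t, |c t| ≤ M) (hc' : ∀ t, |c' t| ≤ M) (h : ∀ t, |c t - c' t| ≤ K * t) :
    |∑' t, γ ^ t * c t - ∑' t, γ ^ t * c' t| ≤ K * (γ / (1 - γ) ^ 2) := by
  have hγ : ‖γ‖ < 1 := by rwa [Real.norm_eq_abs, abs_of_nonneg hγ0]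
  rw [← Real.norm_eq_abs, ← (summable_geometric_mul_of_abs_le hγ0 hγ1 hc).tsum_sub
    (summable_geometric_mul_of_abs_le hγ0 hγ1 hc')]
  refine tsum_of_norm_bounded ((hasSum_coe_mul_geometric_of_norm_lt_one hγ).mul_left K)
    fun t => ?_
  calc ‖γ ^ t * c t - γ ^ t * c' t‖ = γ ^ t * |c t - c' t| := by
        rw [← mul_sub, Real.norm_eq_abs, abs_mul, abs_of_nonneg (pow_nonneg hγ0 t)]
    _ ≤ γ ^ t * (K * t) := mul_le_mul_of_nonneg_left (h t) (pow_nonneg hγ0 t)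
    _ = K * (t * γ ^ t) := by ring

section MDP

variable {S A : Type} [Fintype S] [Fintype A]

noncomputable def policyKernel (T : S → A → S → ℝ) (π : S → A → ℝ) (s s' : S) : ℝ :=
  ∑ a, π s a * T s a s'

lemma policyKernel_mem_stdSimplex {T : S → A → S → ℝ} {π : S → A → ℝ}
    (hT : ∀ s a, T s a ∈ stdSimplex ℝ S) (hπ : ∀ s, π s ∈ stdSimplex ℝ A) (s : S) :
    policyKernel T π s ∈ stdSimplex ℝ S :=
  sum_mul_mem_stdSimplex (hπ s) (hT s)

lemma sum_abs_policyKernel_sub_le {T T' : S → A → S → ℝ} {π : S → A → ℝ} {ε : ℝ}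
    (hπ : ∀ s, π s ∈ stdSimplex ℝ A) (h : ∀ s a, tvDist (T s a) (T' s a) ≤ ε) (s : S) :
    ∑ s', |policyKernel T π s s' - policyKernel T' π s s'| ≤ 2 * ε := by
  simp only [policyKernel, ← sum_sub_distrib, ← mul_sub]
  exact sum_abs_sum_mul_le_of_mem_stdSimplex (hπ s) fun a => by
    rw [sum_abs_sub_eq_two_mul_tvDist]; linarith [h s a]

lemma stateDist_succ (d0 : S → ℝ) (T : S → A → S → ℝ) (π : S → A → ℝ) (t : ℕ) (s' : S) :
    stateDist d0 T π (t + 1) s' = ∑ s, stateDist d0 T π t s * policyKernel T π s s' := by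
  simp only [stateDist, policyKernel, mul_sum, mul_assoc]

lemma stateDist_mem_stdSimplex {d0 : S → ℝ} {T : S → A → S → ℝ} {π : S → A → ℝ}
    (hd0 : d0 ∈ stdSimplex ℝ S) (hT : ∀ s a, T s a ∈ stdSimplex ℝ S)
    (hπ : ∀ s, π s ∈ stdSimplex ℝ A) : ∀ t, stateDist d0 T π t ∈ stdSimplex ℝ S
  | 0 => hd0
  | t + 1 => by
    rw [funext (stateDist_succ d0 T π t)]
    exact sum_mul_mem_stdSimplex (stateDist_mem_stdSimplex hd0 hT hπ t)
      (policyKernel_mem_stdSimplex hT hπ)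

lemma sum_abs_stateDist_sub_le {d0 : S → ℝ} {T T' : S → A → S → ℝ} {π : S → A → ℝ} {ε : ℝ}
    (hd0 : d0 ∈ stdSimplex ℝ S) (hT : ∀ s a, T s a ∈ stdSimplex ℝ S)
    (hT' : ∀ s a, T' s a ∈ stdSimplex ℝ S) (hπ : ∀ s, π s ∈ stdSimplex ℝ A)
    (h : ∀ s a, tvDist (T s a) (T' s a) ≤ ε) :
    ∀ t : ℕ, ∑ s, |stateDist d0 T π t s - stateDist d0 T' π t s| ≤ 2 * ε * t
  | 0 => by simp [stateDist]
  | t + 1 => by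
    set d := stateDist d0 T π t
    set d' := stateDist d0 T' π t
    have hsplit : ∀ s', stateDist d0 T π (t + 1) s' - stateDist d0 T' π (t + 1) s' =
        ∑ s, (d s - d' s) * policyKernel T π s s' +
          ∑ s, d' s * (policyKernel T π s s' - policyKernel T' π s s') := by
      intro s'
      simp only [stateDist_succ, ← sum_add_distrib, ← sum_sub_distrib]
      exact sum_congr rfl fun s _ => by ring
    calc ∑ s', |stateDist d0 T π (t + 1) s' - stateDist d0 T' π (t + 1) s'|
        ≤ ∑ s', |∑ s, (d s - d' s) * policyKernel T π s s'| +
            ∑ s', |∑ s, d' s * (policyKernel T π s s' - policyKernel T' π s s')| := by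
          refine (sum_le_sum fun s' _ => ?_).trans_eq sum_add_distrib
          rw [hsplit]
          exact abs_add_le _ _
      _ ≤ 2 * ε * t + 2 * ε := add_le_add
          ((sum_abs_sum_mul_le_sum_abs _ (policyKernel_mem_stdSimplex hT hπ)).trans
            (sum_abs_stateDist_sub_le hd0 hT hT' hπ h t))
          (sum_abs_sum_mul_le_of_mem_stdSimplex (stateDist_mem_stdSimplex hd0 hT' hπ t)
            (sum_abs_policyKernel_sub_le hπ h))
      _ = 2 * ε * ↑(t + 1) := by push_cast; ring

lemma Jinf_eq_tsum (d0 : S → ℝ) (T : S → A → S → ℝ) (π : S → A → ℝ) (r : S → A → ℝ) (γ : ℝ) :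
    Jinf d0 T π r γ = ∑' t, γ ^ t * ∑ s, stateDist d0 T π t s * ∑ a, π s a * r s a := by
  simp only [Jinf, mul_sum, mul_assoc]

theorem abs_Jinf_sub_le_of_tvDist_le {d0 : S → ℝ} {T T' : S → A → S → ℝ} {π : S → A → ℝ}
    {r : S → A → ℝ} {rmax γ ε : ℝ} (hγ0 : 0 ≤ γ) (hγ1 : γ < 1)
    (hd0 : d0 ∈ stdSimplex ℝ S) (hT : ∀ s a, T s a ∈ stdSimplex ℝ S)
    (hT' : ∀ s a, T' s a ∈ stdSimplex ℝ S) (hπ : ∀ s, π s ∈ stdSimplex ℝ A)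
    (hr : ∀ s a, |r s a| ≤ rmax) (h : ∀ s a, tvDist (T s a) (T' s a) ≤ ε) :
    |Jinf d0 T π r γ - Jinf d0 T' π r γ| ≤ 2 * rmax * ε * (γ / (1 - γ) ^ 2) := by
  have hR : ∀ s, |∑ a, π s a * r s a| ≤ rmax := fun s =>
    abs_sum_mul_le_of_mem_stdSimplex (hπ s) (hr s)
  obtain ⟨s, -⟩ := nonempty_of_sum_ne_zero (hd0.2.symm ▸ one_ne_zero : ∑ s, d0 s ≠ 0)
  have hrmax : 0 ≤ rmax := (abs_nonneg _).trans (hR s)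
  rw [Jinf_eq_tsum, Jinf_eq_tsum]
  refine abs_tsum_geometric_mul_sub_le hγ0 hγ1
    (fun t => abs_sum_mul_le_of_mem_stdSimplex (stateDist_mem_stdSimplex hd0 hT hπ t) hR)
    (fun t => abs_sum_mul_le_of_mem_stdSimplex (stateDist_mem_stdSimplex hd0 hT' hπ t) hR)
    fun t => ?_
  calc |∑ s, stateDist d0 T π t s * ∑ a, π s a * r s a -
        ∑ s, stateDist d0 T' π t s * ∑ a, π s a * r s a|
      = |∑ s, (stateDist d0 T π t s - stateDist d0 T' π t s) * ∑ a, π s a * r s a| := by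
        simp only [sub_mul, sum_sub_distrib]
    _ ≤ rmax * (2 * ε * t) := (abs_sum_mul_le hR).trans <|
        mul_le_mul_of_nonneg_left (sum_abs_stateDist_sub_le hd0 hT hT' hπ h t) hrmax
    _ = 2 * rmax * ε * t := by ring

end MDP

theorem mbpo_return_bound_general
    {S A : Type} [Fintype S] [Fintype A]
    (d0 : S → ℝ) (T That : S → A → S → ℝ) (π πβ : S → A → ℝ)
    (r : S → A → ℝ) (rmax : ℝ) (γ εm επ : ℝ)
    (hγ0 : 0 < γ) (hγ1 : γ < 1)
    (hd00 : ∀ s, 0 ≤ d0 s) (hd01 : ∑ s, d0 s = 1)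
    (hT0 : ∀ s a s', 0 ≤ T s a s') (hT1 : ∀ s a, ∑ s', T s a s' = 1)
    (hThat0 : ∀ s a s', 0 ≤ That s a s') (hThat1 : ∀ s a, ∑ s', That s a s' = 1)
    (hπ0 : ∀ s a, 0 ≤ π s a) (hπ1 : ∀ s, ∑ a, π s a = 1)
    (hr : ∀ s a, |r s a| ≤ rmax)
    (hεm : ∀ s a, tvDist (That s a) (T s a) ≤ εm)
    (hεπ : ∀ s, tvDist (π s) (πβ s) ≤ επ) :
    Jinf d0 T π r γ ≥
      Jinf d0 That π r γ -
        (2 * γ * rmax * (εm + 2 * επ) / (1 - γ) ^ 2 + 4 * rmax * επ / (1 - γ)) := by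
  have hmodel := abs_Jinf_sub_le_of_tvDist_le hγ0.le hγ1 ⟨hd00, hd01⟩
    (fun s a => ⟨hT0 s a, hT1 s a⟩) (fun s a => ⟨hThat0 s a, hThat1 s a⟩)
    (fun s => ⟨hπ0 s, hπ1 s⟩) hr fun s a => (tvDist_comm _ _).trans_le (hεm s a)
  obtain ⟨s, -⟩ := nonempty_of_sum_ne_zero (hd01.symm ▸ one_ne_zero : ∑ s, d0 s ≠ 0)
  obtain ⟨a, -⟩ := nonempty_of_sum_ne_zero (hπ1 s |>.symm ▸ one_ne_zero : ∑ a, π s a ≠ 0)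
  have hrmax : 0 ≤ rmax := (abs_nonneg _).trans (hr s a)
  have hεπ0 : 0 ≤ επ := (tvDist_nonneg _ _).trans (hεπ s)
  have hpolicy : 0 ≤ 4 * γ * rmax * επ / (1 - γ) ^ 2 + 4 * rmax * επ / (1 - γ) := by
    have : 0 < 1 - γ := sub_pos.2 hγ1
    positivity
  have hsplit : 2 * γ * rmax * (εm + 2 * επ) / (1 - γ) ^ 2 + 4 * rmax * επ / (1 - γ) =
      2 * rmax * εm * (γ / (1 - γ) ^ 2) +
        (4 * γ * rmax * επ / (1 - γ) ^ 2 + 4 * rmax * επ / (1 - γ)) := by ring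
  linarith [(abs_le.mp hmodel).1]

/-- **Model-based policy learning return bound (Janner et al., as stated in the
tutorial).** If the learned model `T̂` is `ε_m`-close to the true dynamics `T` in total
variation at every `(s,a)`, and the policy `π` is `ε_π`-close to the behavior policy
`π_β` at every `s`, then the true return of `π` is lower-bounded by its return under the
model minus `2γ·r_max·(ε_m + 2ε_π)/(1−γ)² + 4·r_max·ε_π/(1−γ)`. -/
theorem mbpo_return_bound
    {S A : Type} [Fintype S] [Fintype A]
    (d0 : S → ℝ) (T That : S → A → S → ℝ) (π πβ : S → A → ℝ)
    (r : S → A → ℝ) (rmax : ℝ) (γ εm επ : ℝ)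
    (hγ0 : 0 < γ) (hγ1 : γ < 1)
    (hd00 : ∀ s, 0 ≤ d0 s) (hd01 : ∑ s, d0 s = 1)
    (hT0 : ∀ s a s', 0 ≤ T s a s') (hT1 : ∀ s a, ∑ s', T s a s' = 1)
    (hThat0 : ∀ s a s', 0 ≤ That s a s') (hThat1 : ∀ s a, ∑ s', That s a s' = 1)
    (hπ0 : ∀ s a, 0 ≤ π s a) (hπ1 : ∀ s, ∑ a, π s a = 1)
    (hβ0 : ∀ s a, 0 ≤ πβ s a) (hβ1 : ∀ s, ∑ a, πβ s a = 1)
    (hr : ∀ s a, |r s a| ≤ rmax)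
    (hεm : ∀ s a, tvDist (That s a) (T s a) ≤ εm)
    (hεπ : ∀ s, tvDist (π s) (πβ s) ≤ επ) :
    Jinf d0 T π r γ ≥
      Jinf d0 That π r γ -
        (2 * γ * rmax * (εm + 2 * επ) / (1 - γ) ^ 2 + 4 * rmax * επ / (1 - γ)) :=
  mbpo_return_bound_general d0 T That π πβ r rmax γ εm επ hγ0 hγ1 hd00 hd01 hT0 hT1 hThat0 hThat1
    hπ0 hπ1 hr hεm hεπ
end
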